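/- arXiv:1903.09825 — 3 statements merged into one kernel-verified Lean document; each statement's English description precedes it below -/
import Mathlib

section
/- For every graph G whose edge set is nonempty, there exists an edge e of G such that avm(G - e) < avm(G), where avm denotes the average size of a matching. -/
/-!
For an edge `e`, let `Mₑ` and `Sₑ` be the number and the total size of the matchings containing
`e`. Then `avm (G - e) = (S - Sₑ) / (M - Mₑ)`, which is below `S / M` exactly when
`S * Mₑ < Sₑ * M`. Double counting gives `∑ₑ Mₑ = S` and `∑ₑ Sₑ = ∑_A |A|²`, so summing over
all edges it suffices that `S² < M * ∑_A |A|²`: this is Cauchy–Schwarz, strict because the empty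
matching and a single edge have different sizes.
-/

open Finset Polynomial

namespace AvgMatching

variable {V : Type*} [Fintype V] [DecidableEq V]

/-- A matching of `G`, viewed as a finite set of edges of `G`
no two of which share a vertex. -/
def IsMatchingSet (G : SimpleGraph V) (A : Finset (Sym2 V)) : Prop :=
  ↑A ⊆ G.edgeSet ∧ (A : Set (Sym2 V)).Pairwise fun e f => ∀ v : V, v ∈ e → v ∉ f

open Classical in
/-- The finite set of all matchings of `G` (including the empty matching). -/
noncomputable def matchings (G : SimpleGraph V) : Finset (Finset (Sym2 V)) :=
  Finset.univ.filter (IsMatchingSet G)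

/-- `M(G)`: the number of matchings of `G` (including the empty one). -/
noncomputable def numM (G : SimpleGraph V) : ℕ := (matchings G).card

/-- `S(G)`: the sum of the sizes of all matchings of `G`. -/
noncomputable def totS (G : SimpleGraph V) : ℕ := ∑ A ∈ matchings G, A.card

/-- `avm(G) = S(G)/M(G)`: the average size of a matching of `G`. -/
noncomputable def avm (G : SimpleGraph V) : ℚ := (totS G : ℚ) / (numM G)

/-- `m(G,k)`: the number of matchings of size `k` in `G`. -/
noncomputable def mCount (G : SimpleGraph V) (k : ℕ) : ℕ :=
  ((matchings G).filter fun A => A.card = k).card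

/-- `μ(G)`: the matching number of `G`. -/
noncomputable def matchNum (G : SimpleGraph V) : ℕ := (matchings G).sup Finset.card

/-- Delete a vertex `u` (keeping it as an isolated vertex, which does not
affect matchings): all edges incident to `u` are removed. -/
def delVert (G : SimpleGraph V) (u : V) : SimpleGraph V :=
  G.deleteEdges {e : Sym2 V | u ∈ e}

section StrictCauchySchwarz

variable {ι R : Type*}

lemma sum_sum_sub_sq [CommRing R] (s : Finset ι) (f : ι → R) :
    ∑ i ∈ s, ∑ j ∈ s, (f i - f j) ^ 2 = 2 * (#s * ∑ i ∈ s, f i ^ 2 - (∑ i ∈ s, f i) ^ 2) := by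
  simp only [sub_sq, sum_add_distrib, sum_sub_distrib, sum_const, nsmul_eq_mul, ← mul_sum,
    ← sum_mul]
  ring

lemma sq_sum_lt_card_mul_sum_sq [CommRing R] [LinearOrder R] [IsStrictOrderedRing R]
    {s : Finset ι} {f : ι → R} (h : ∃ i ∈ s, ∃ j ∈ s, f i ≠ f j) :
    (∑ i ∈ s, f i) ^ 2 < #s * ∑ i ∈ s, f i ^ 2 := by
  obtain ⟨i, hi, j, hj, hij⟩ := h
  have hpos : 0 < ∑ i ∈ s, ∑ j ∈ s, (f i - f j) ^ 2 :=
    sum_pos' (fun _ _ => sum_nonneg fun _ _ => sq_nonneg _)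
      ⟨i, hi, sum_pos' (fun _ _ => sq_nonneg _) ⟨j, hj, sq_pos_iff.2 (sub_ne_zero.2 hij)⟩⟩
  rw [sum_sum_sub_sq] at hpos
  linarith

end StrictCauchySchwarz

section FamilyAverage

variable {α : Type*} [Fintype α] [DecidableEq α]

lemma sum_sum_filter_mem {β : Type*} [AddCommMonoid β] (𝓜 : Finset (Finset α))
    (f : Finset α → β) : ∑ a, ∑ A ∈ 𝓜 with a ∈ A, f A = ∑ A ∈ 𝓜, #A • f A := by
  simp_rw [sum_filter]
  rw [sum_comm]
  refine sum_congr rfl fun A _ => ?_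
  rw [← sum_filter, filter_univ_mem, sum_const]

/-- Stated so that `avm G` is definitionally `avgCard (matchings G)`. -/
noncomputable def avgCard (𝓜 : Finset (Finset α)) : ℚ := ((∑ A ∈ 𝓜, #A : ℕ) : ℚ) / #𝓜

lemma sub_div_sub_lt_div {K : Type*} [Field K] [LinearOrder K] [IsStrictOrderedRing K]
    {S M s m : K} (hmM : m < M) (hM : 0 < M) (h : S * m < s * M) :
    (S - s) / (M - m) < S / M := by
  rw [div_lt_div_iff₀ (sub_pos.2 hmM) hM]
  linarith

theorem exists_avgCard_filter_notMem_lt (𝓜 : Finset (Finset α))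
    (h : ∃ A ∈ 𝓜, ∃ B ∈ 𝓜, #A ≠ #B) : ∃ a, avgCard {A ∈ 𝓜 | a ∉ A} < avgCard 𝓜 := by
  set M : ℚ := ↑(#𝓜)
  set S : ℚ := ∑ A ∈ 𝓜, (#A : ℚ)
  set m : α → ℚ := fun a => ∑ A ∈ 𝓜 with a ∈ A, 1
  set s : α → ℚ := fun a => ∑ A ∈ 𝓜 with a ∈ A, (#A : ℚ)
  have hm : ∑ a, S * m a = S ^ 2 := by
    simp only [m, ← mul_sum, sum_sum_filter_mem, nsmul_one, sq, S]
  have hs : ∑ a, s a * M = M * ∑ A ∈ 𝓜, (#A : ℚ) ^ 2 := by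
    simp only [s, ← sum_mul, sum_sum_filter_mem, nsmul_eq_mul, sq, mul_comm M]
  have hcs : S ^ 2 < M * ∑ A ∈ 𝓜, (#A : ℚ) ^ 2 :=
    sq_sum_lt_card_mul_sum_sq (by exact_mod_cast h)
  obtain ⟨a, -, ha⟩ := exists_lt_of_sum_lt (hm.trans_lt (hcs.trans_eq hs.symm))
  refine ⟨a, ?_⟩
  have hsS : s a ≤ S :=
    sum_le_sum_of_subset_of_nonneg (filter_subset _ _) fun _ _ _ => Nat.cast_nonneg _
  have hmM : m a < M :=
    lt_of_mul_lt_mul_left (ha.trans_le (mul_le_mul_of_nonneg_right hsS (Nat.cast_nonneg _)))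
      (sum_nonneg fun _ _ => Nat.cast_nonneg _)
  have hM : 0 < M := by
    obtain ⟨A, hA, -⟩ := h
    exact Nat.cast_pos.2 (card_pos.2 ⟨A, hA⟩)
  have hcard : (#{A ∈ 𝓜 | a ∉ A} : ℚ) = M - m a := by
    simp only [m, M, sum_const, nsmul_one]
    rw [eq_sub_iff_add_eq']
    exact_mod_cast card_filter_add_card_filter_not _
  have hsum : ∑ A ∈ 𝓜 with a ∉ A, (#A : ℚ) = S - s a := by
    rw [eq_sub_iff_add_eq', sum_filter_add_sum_filter_not]
  rw [avgCard, avgCard, Nat.cast_sum, Nat.cast_sum, hcard, hsum]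
  exact sub_div_sub_lt_div hmM hM ha

end FamilyAverage

lemma matchings_deleteEdges_singleton (G : SimpleGraph V) (e : Sym2 V) :
    matchings (G.deleteEdges {e}) = {A ∈ matchings G | e ∉ A} := by
  ext A
  simp only [matchings, mem_filter, mem_univ, true_and, IsMatchingSet,
    SimpleGraph.edgeSet_deleteEdges, Set.subset_sdiff, Set.disjoint_singleton_right, mem_coe]
  tauto

theorem exists_edge_avm_lt (G : SimpleGraph V) (h : G.edgeSet.Nonempty) :
    ∃ e ∈ G.edgeSet, avm (G.deleteEdges {e}) < avm G := by
  obtain ⟨e₀, he₀⟩ := h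
  have hsizes : ∃ A ∈ matchings G, ∃ B ∈ matchings G, #A ≠ #B :=
    ⟨∅, by simp [matchings, IsMatchingSet], {e₀}, by simp [matchings, IsMatchingSet, he₀],
      by simp⟩
  obtain ⟨e, he⟩ := exists_avgCard_filter_notMem_lt (matchings G) hsizes
  rw [← matchings_deleteEdges_singleton] at he
  refine ⟨e, ?_, he⟩
  by_contra hnot
  rw [SimpleGraph.deleteEdges_eq_self.2 (Set.disjoint_singleton_right.2 hnot)] at he
  exact lt_irrefl _ he

end AvgMatching
end

section
/- For every n-vertex graph G and every nonnegative integer k with k < μ(G), one has m(K_n, k) * m(G, k+1) ≤ m(K_n, k+1) * m(G, k), where μ(G) is the matching number of G and m(H, j) is the number of j-matchings of H. -/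
open Finset Polynomial

namespace AvgMatching

variable {V : Type*} [Fintype V] [DecidableEq V]

lemma mem_matchings {G : SimpleGraph V} {A : Finset (Sym2 V)} :
    A ∈ matchings G ↔ IsMatchingSet G A := by
  simp [matchings]

open Classical in
/-- edges of `G` that can extend the matching `A`. -/
noncomputable def extSet (G : SimpleGraph V) (A : Finset (Sym2 V)) : Finset (Sym2 V) :=
  Finset.univ.filter (fun e => e ∈ G.edgeSet ∧ ∀ f ∈ A, ∀ v ∈ e, v ∉ f)

lemma mem_extSet {G : SimpleGraph V} {A : Finset (Sym2 V)} {e : Sym2 V} :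
    e ∈ extSet G A ↔ e ∈ G.edgeSet ∧ ∀ f ∈ A, ∀ v ∈ e, v ∉ f := by
  simp [extSet]

open Classical in
noncomputable def verts (A : Finset (Sym2 V)) : Finset V :=
  A.biUnion (fun e => Finset.univ.filter (· ∈ e))

lemma mem_verts {A : Finset (Sym2 V)} {v : V} :
    v ∈ verts A ↔ ∃ e ∈ A, v ∈ e := by
  simp [verts]

lemma symm_rel : Symmetric (fun e f : Sym2 V => ∀ v : V, v ∈ e → v ∉ f) := by
  intro e f h v hvf hve
  exact h v hve hvf

lemma isMatchingSet_erase {G : SimpleGraph V} {A : Finset (Sym2 V)} {e : Sym2 V}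
    (hA : IsMatchingSet G A) : IsMatchingSet G (A.erase e) := by
  refine ⟨fun f hf => hA.1 (by exact_mod_cast Finset.erase_subset _ _ (by exact_mod_cast hf)), ?_⟩
  exact hA.2.mono (by exact_mod_cast Finset.erase_subset _ _)

lemma isMatchingSet_insert {G : SimpleGraph V} {A : Finset (Sym2 V)} {e : Sym2 V}
    (hA : IsMatchingSet G A) (he : e ∈ G.edgeSet) (hd : ∀ f ∈ A, ∀ v ∈ e, v ∉ f) :
    IsMatchingSet G (insert e A) := by
  constructor
  · intro f hf
    rcases Finset.mem_insert.1 (by exact_mod_cast hf) with rfl | hf'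
    · exact he
    · exact hA.1 hf'
  · rw [Finset.coe_insert]
    refine (haveI : Std.Symm (fun e f : Sym2 V => ∀ v : V, v ∈ e → v ∉ f) := ⟨fun _ _ h => symm_rel h⟩; Set.pairwise_insert_of_symm) |>.2 ⟨hA.2, ?_⟩
    intro f hf _ v hv
    exact fun hvf => hd f hf v hv hvf

lemma double_count (G : SimpleGraph V) (k : ℕ) :
    (k + 1) * mCount G (k + 1) =
      ∑ A ∈ (matchings G).filter (fun A => A.card = k), (extSet G A).card := by
  classical
  have lhs : (k + 1) * mCount G (k + 1) =
      ∑ A ∈ (matchings G).filter (fun A => A.card = k + 1), A.card := by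
    rw [Finset.sum_congr rfl (fun A hA => (Finset.mem_filter.1 hA).2), mCount,
      Finset.sum_const, smul_eq_mul, mul_comm]
  rw [lhs, ← Finset.card_sigma, ← Finset.card_sigma]
  refine Finset.card_bij' (fun p _ => ⟨p.1.erase p.2, p.2⟩)
    (fun p _ => ⟨insert p.2 p.1, p.2⟩) ?_ ?_ ?_ ?_
  · rintro ⟨A, e⟩ hp
    simp only [Finset.mem_sigma, Finset.mem_filter] at hp ⊢
    obtain ⟨⟨hAm, hAc⟩, he⟩ := hp
    have hM := mem_matchings.1 hAm
    refine ⟨⟨mem_matchings.2 (isMatchingSet_erase hM), by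
      rw [Finset.card_erase_of_mem he, hAc]; rfl⟩, ?_⟩
    rw [mem_extSet]
    refine ⟨hM.1 he, ?_⟩
    intro f hf v hv
    exact hM.2 (Finset.mem_coe.2 he) (Finset.mem_coe.2 (Finset.mem_of_mem_erase hf))
      (Finset.ne_of_mem_erase hf).symm v hv
  · rintro ⟨B, e⟩ hp
    simp only [Finset.mem_sigma, Finset.mem_filter] at hp ⊢
    obtain ⟨⟨hBm, hBc⟩, he⟩ := hp
    rw [mem_extSet] at he
    have heB : e ∉ B := by
      intro h
      exact he.2 e h e.out.1 (Sym2.out_fst_mem e) (Sym2.out_fst_mem e)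
    refine ⟨⟨mem_matchings.2 (isMatchingSet_insert (mem_matchings.1 hBm) he.1 he.2), by
      rw [Finset.card_insert_of_notMem heB, hBc]⟩, Finset.mem_insert_self _ _⟩
  · rintro ⟨A, e⟩ hp
    simp only [Finset.mem_sigma, Finset.mem_filter] at hp
    simp [Finset.insert_erase hp.2]
  · rintro ⟨B, e⟩ hp
    simp only [Finset.mem_sigma, Finset.mem_filter] at hp
    obtain ⟨⟨hBm, hBc⟩, he⟩ := hp
    rw [mem_extSet] at he
    have heB : e ∉ B := by
      intro h
      exact he.2 e h e.out.1 (Sym2.out_fst_mem e) (Sym2.out_fst_mem e)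
    simp [Finset.erase_insert heB]


lemma card_nondiag (U : Finset V) :
    ((U.sym2).filter (fun e => ¬ e.IsDiag)).card = U.card.choose 2 := by
  classical
  have h1 : (U.sym2).filter (fun e => e.IsDiag) = U.image Sym2.diag := by
    ext e
    induction e with
    | _ x y =>
      simp only [Finset.mem_filter, Finset.mem_image, Finset.mem_sym2_iff, Sym2.isDiag_iff_proj_eq]
      constructor
      · rintro ⟨hmem, h⟩
        exact ⟨x, hmem x (Sym2.mem_mk_left x y), by simp [Sym2.diag, ← h]⟩
      · rintro ⟨a, ha, h⟩
        have hx : x = a ∧ y = a := by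
          have := Sym2.eq_iff.1 h.symm
          tauto
        obtain ⟨rfl, rfl⟩ := hx
        exact ⟨fun b hb => by rwa [Sym2.mem_iff.1 hb |>.elim id id], rfl⟩
  have h2 := Finset.card_filter_add_card_filter_not
    (s := U.sym2) (p := fun e => e.IsDiag)
  rw [h1, Finset.card_image_of_injective _ Sym2.diag_injective, Finset.card_sym2] at h2
  have h3 : (U.card + 1).choose 2 = U.card + U.card.choose 2 := by
    rw [Nat.choose_succ_succ, Nat.choose_one_right]
  omega

lemma card_verts {G : SimpleGraph V} {A : Finset (Sym2 V)} (hA : IsMatchingSet G A) :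
    (verts A).card = 2 * A.card := by
  classical
  rw [verts, Finset.card_biUnion, Finset.sum_congr rfl
    (fun e he => ?_), Finset.sum_const, smul_eq_mul, mul_comm]
  · have hnd : ¬ e.IsDiag := SimpleGraph.not_isDiag_of_mem_edgeSet G (hA.1 he)
    induction e with
    | _ x y =>
      have hxy : x ≠ y := by rwa [Sym2.isDiag_iff_proj_eq] at hnd
      have : Finset.univ.filter (· ∈ s(x, y)) = {x, y} := by
        ext v; simp [Sym2.mem_iff]
      rw [this, Finset.card_insert_of_notMem (by simp [hxy]), Finset.card_singleton]
  · intro e he f hf hef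
    simp only [Finset.disjoint_left, Finset.mem_filter]
    rintro v ⟨-, hv⟩ ⟨-, hv'⟩
    exact hA.2 (Finset.mem_coe.2 he) (Finset.mem_coe.2 hf) hef v hv hv'

lemma extSet_subset {G : SimpleGraph V} {A : Finset (Sym2 V)} :
    extSet G A ⊆ ((verts A)ᶜ).sym2.filter (fun e => ¬ e.IsDiag) := by
  classical
  intro e he
  rw [mem_extSet] at he
  rw [Finset.mem_filter, Finset.mem_sym2_iff]
  refine ⟨fun v hv => ?_, SimpleGraph.not_isDiag_of_mem_edgeSet G he.1⟩
  rw [Finset.mem_compl, mem_verts]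
  rintro ⟨f, hf, hvf⟩
  exact he.2 f hf v hv hvf

lemma extSet_top {A : Finset (Sym2 V)} :
    extSet (⊤ : SimpleGraph V) A = ((verts A)ᶜ).sym2.filter (fun e => ¬ e.IsDiag) := by
  classical
  refine Finset.Subset.antisymm extSet_subset ?_
  intro e he
  rw [Finset.mem_filter, Finset.mem_sym2_iff] at he
  rw [mem_extSet, SimpleGraph.edgeSet_top]
  refine ⟨he.2, fun f hf v hv hvf => ?_⟩
  have := he.1 v hv
  rw [Finset.mem_compl, mem_verts] at this
  exact this ⟨f, hf, hvf⟩


lemma key_le (G : SimpleGraph V) (k : ℕ) :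
    (k + 1) * mCount G (k + 1) ≤ (Fintype.card V - 2 * k).choose 2 * mCount G k := by
  classical
  rw [double_count]
  calc ∑ A ∈ (matchings G).filter (fun A => A.card = k), (extSet G A).card
      ≤ ∑ _A ∈ (matchings G).filter (fun A => A.card = k),
          (Fintype.card V - 2 * k).choose 2 := by
        refine Finset.sum_le_sum (fun A hA => ?_)
        rw [Finset.mem_filter] at hA
        have h1 := Finset.card_le_card (extSet_subset (G := G) (A := A))
        rw [card_nondiag, Finset.card_compl, card_verts (mem_matchings.1 hA.1), hA.2] at h1
        exact h1
    _ = (Fintype.card V - 2 * k).choose 2 * mCount G k := by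
        rw [Finset.sum_const, smul_eq_mul, mCount, mul_comm]

lemma key_eq (k : ℕ) :
    (k + 1) * mCount (⊤ : SimpleGraph V) (k + 1) =
      (Fintype.card V - 2 * k).choose 2 * mCount (⊤ : SimpleGraph V) k := by
  classical
  rw [double_count]
  calc ∑ A ∈ (matchings (⊤ : SimpleGraph V)).filter (fun A => A.card = k),
          (extSet (⊤ : SimpleGraph V) A).card
      = ∑ A ∈ (matchings (⊤ : SimpleGraph V)).filter (fun A => A.card = k),
          (Fintype.card V - 2 * k).choose 2 := by
        refine Finset.sum_congr rfl (fun A hA => ?_)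
        rw [Finset.mem_filter] at hA
        rw [extSet_top, card_nondiag, Finset.card_compl,
          card_verts (mem_matchings.1 hA.1), hA.2]
    _ = (Fintype.card V - 2 * k).choose 2 * mCount (⊤ : SimpleGraph V) k := by
        rw [Finset.sum_const, smul_eq_mul, mCount, mul_comm]

theorem mCount_complete_ratio_le (n : ℕ) (G : SimpleGraph (Fin n)) (k : ℕ)
    (hk : k < matchNum G) :
    mCount (⊤ : SimpleGraph (Fin n)) k * mCount G (k + 1) ≤
      mCount (⊤ : SimpleGraph (Fin n)) (k + 1) * mCount G k := by
  have h1 := key_eq (V := Fin n) k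
  have h2 := key_le G k
  have h3 : (k + 1) * (mCount (⊤ : SimpleGraph (Fin n)) k * mCount G (k + 1)) ≤
      (k + 1) * (mCount (⊤ : SimpleGraph (Fin n)) (k + 1) * mCount G k) := by
    calc (k + 1) * (mCount (⊤ : SimpleGraph (Fin n)) k * mCount G (k + 1))
        = mCount (⊤ : SimpleGraph (Fin n)) k * ((k + 1) * mCount G (k + 1)) := by ring
      _ ≤ mCount (⊤ : SimpleGraph (Fin n)) k *
            ((Fintype.card (Fin n) - 2 * k).choose 2 * mCount G k) :=
          Nat.mul_le_mul_left _ h2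
      _ = ((k + 1) * mCount (⊤ : SimpleGraph (Fin n)) (k + 1)) * mCount G k := by
          rw [h1]; ring
      _ = (k + 1) * (mCount (⊤ : SimpleGraph (Fin n)) (k + 1) * mCount G k) := by ring
  exact Nat.le_of_mul_le_mul_left h3 (Nat.succ_pos k)

end AvgMatching
end

section
/- Let G be an n-vertex graph and μ_1,...,μ_n the (real) zeros of its matching polynomial Φ(G,x) = Σ_k (-1)^k m(G,k) x^{n-2k}. Then avm(G) = (1/2) * Σ_{j=1}^n μ_j²/(μ_j² + 1). -/
open Finset Polynomial

namespace AvgMatching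

variable {V : Type*} [Fintype V] [DecidableEq V]

/-- The matching polynomial `Φ(G,x) = ∑ₖ (-1)^k m(G,k) x^(n-2k)` of `G`. -/
noncomputable def matchPoly (G : SimpleGraph V) : Polynomial ℝ :=
  ∑ k ∈ Finset.range (Fintype.card V + 1),
    Polynomial.C ((-1 : ℝ) ^ k * (mCount G k : ℝ)) * Polynomial.X ^ (Fintype.card V - 2 * k)

lemma card_verts_s18 (e : Sym2 V) (he : ¬ e.IsDiag) :
    (Finset.univ.filter (· ∈ e)).card = 2 := by
  induction e using Sym2.ind with
  | _ a b =>
    rw [Sym2.isDiag_iff_proj_eq] at he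
    have : (Finset.univ.filter (· ∈ s(a, b))) = {a, b} := by
      ext v; simp [Sym2.mem_iff]
    rw [this, Finset.card_insert_of_notMem (by simpa using he), Finset.card_singleton]

lemma two_mul_card_le (G : SimpleGraph V) (A : Finset (Sym2 V)) (hA : A ∈ matchings G) :
    2 * A.card ≤ Fintype.card V := by
  classical
  rw [matchings, Finset.mem_filter] at hA
  obtain ⟨-, hsub, hpw⟩ := hA
  have hdisj : ∀ e ∈ A, ∀ f ∈ A, e ≠ f →
      Disjoint (Finset.univ.filter (· ∈ e)) (Finset.univ.filter (· ∈ f)) := by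
    intro e he f hf hef
    rw [Finset.disjoint_left]
    intro v hv hv'
    simp only [Finset.mem_filter] at hv hv'
    exact hpw (by simpa using he) (by simpa using hf) hef v hv.2 hv'.2
  calc 2 * A.card = ∑ e ∈ A, (Finset.univ.filter (· ∈ e)).card := by
        rw [Finset.sum_congr rfl fun e he =>
          card_verts_s18 e (G.not_isDiag_of_mem_edgeSet (hsub (by simpa using he)))]
        simp [mul_comm]
    _ = (A.biUnion fun e => Finset.univ.filter (· ∈ e)).card :=
        (Finset.card_biUnion hdisj).symm
    _ ≤ Fintype.card V := by simpa using Finset.card_le_card (Finset.subset_univ _)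

lemma mCount_eq_zero (G : SimpleGraph V) (k : ℕ) (hk : Fintype.card V < 2 * k) :
    mCount G k = 0 := by
  rw [mCount, Finset.card_eq_zero, Finset.filter_eq_empty_iff]
  intro A hA hcard
  exact absurd (hcard ▸ two_mul_card_le G A hA) (not_le.2 hk)

lemma numM_eq_sum (G : SimpleGraph V) :
    numM G = ∑ k ∈ Finset.range (Fintype.card V + 1), mCount G k :=
  Finset.card_eq_sum_card_fiberwise fun A hA => Finset.mem_range.2 <|
    Nat.lt_succ_of_le <| le_trans (Nat.le_mul_of_pos_left _ two_pos) (two_mul_card_le G A hA)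

lemma totS_eq_sum (G : SimpleGraph V) :
    totS G = ∑ k ∈ Finset.range (Fintype.card V + 1), k * mCount G k := by
  rw [totS, ← Finset.sum_fiberwise_of_maps_to
    (fun A hA => Finset.mem_range.2 <| Nat.lt_succ_of_le <|
      le_trans (Nat.le_mul_of_pos_left _ two_pos) (two_mul_card_le G A hA)) Finset.card]
  refine Finset.sum_congr rfl fun k _ => ?_
  rw [mCount, Finset.sum_congr rfl fun A hA => (Finset.mem_filter.1 hA).2]
  simp [mul_comm]

lemma numM_pos (G : SimpleGraph V) : 0 < numM G := by
  rw [numM, Finset.card_pos]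
  exact ⟨∅, by simp [matchings, IsMatchingSet]⟩

lemma derivative_finset_prod {R : Type*} [CommSemiring R] {ι : Type*} [DecidableEq ι]
    (s : Finset ι) (f : ι → R[X]) :
    derivative (∏ i ∈ s, f i) = ∑ i ∈ s, (∏ j ∈ s.erase i, f j) * derivative (f i) := by
  induction s using Finset.induction with
  | empty => simp
  | @insert a s ha ih =>
    rw [Finset.prod_insert ha, derivative_mul, ih, Finset.sum_insert ha,
      Finset.erase_insert ha, Finset.mul_sum]
    congr 1
    · ring
    · refine Finset.sum_congr rfl fun i hi => ?_
      rw [Finset.erase_insert_of_ne (fun h : a = i => ha (h ▸ hi)),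
        Finset.prod_insert (fun h => ha (Finset.erase_subset _ _ h))]
      ring

lemma I_pow_key (k n : ℕ) (hk : 2 * k ≤ n) :
    (-1 : ℂ) ^ k * Complex.I ^ (n - 2 * k) = Complex.I ^ n := by
  have : Complex.I ^ n = Complex.I ^ (2 * k) * Complex.I ^ (n - 2 * k) := by
    rw [← pow_add, Nat.add_sub_cancel' hk]
  rw [this, pow_mul, Complex.I_sq]

lemma aeval_I (G : SimpleGraph V) :
    aeval Complex.I (matchPoly G) = (numM G : ℂ) * Complex.I ^ (Fintype.card V) := by
  set n := Fintype.card V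
  rw [matchPoly, map_sum]
  have h1 : ∀ k ∈ Finset.range (n + 1),
      aeval Complex.I (Polynomial.C ((-1 : ℝ) ^ k * (mCount G k : ℝ))
        * Polynomial.X ^ (n - 2 * k))
      = (mCount G k : ℂ) * Complex.I ^ n := by
    intro k _
    rw [map_mul, aeval_C, map_pow, aeval_X]
    by_cases hk : 2 * k ≤ n
    · push_cast
      rw [mul_comm ((-1:ℂ)^k) ((mCount G k : ℕ) : ℂ), mul_assoc, I_pow_key k n hk]
    · rw [mCount_eq_zero G k (not_le.1 hk)]
      simp
  rw [Finset.sum_congr rfl h1, ← Finset.sum_mul, numM_eq_sum G]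
  push_cast
  ring

lemma aeval_I_deriv (G : SimpleGraph V) :
    aeval Complex.I (derivative (matchPoly G)) * Complex.I
      = ((Fintype.card V : ℂ) * numM G - 2 * totS G) * Complex.I ^ (Fintype.card V) := by
  set n := Fintype.card V with hn
  rw [matchPoly, derivative_sum]
  simp only [derivative_C_mul_X_pow]
  rw [map_sum, Finset.sum_mul]
  have h1 : ∀ k ∈ Finset.range (n + 1),
      aeval Complex.I (Polynomial.C ((-1 : ℝ) ^ k * (mCount G k : ℝ) * ((n - 2 * k : ℕ) : ℝ))
        * Polynomial.X ^ (n - 2 * k - 1)) * Complex.I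
      = (mCount G k : ℂ) * ((n : ℂ) - 2 * k) * Complex.I ^ n := by
    intro k _
    rw [map_mul, aeval_C, map_pow, aeval_X]
    by_cases hk : 2 * k ≤ n
    · rcases Nat.eq_or_lt_of_le hk with heq | hlt
      · rw [← heq]
        simp
      · have h2 : 1 ≤ n - 2 * k := Nat.le_sub_of_add_le (by omega)
        have h3 : Complex.I ^ (n - 2 * k - 1) * Complex.I = Complex.I ^ (n - 2 * k) := by
          rw [← pow_succ, Nat.sub_add_cancel h2]
        have h4 : ((n - 2 * k : ℕ) : ℝ) = (n : ℝ) - 2 * k := by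
          push_cast [Nat.cast_sub hk]; ring
        rw [mul_assoc, h3, h4]
        push_cast
        rw [show ((-1:ℂ)^k * (mCount G k : ℂ) * ((n:ℂ) - 2*k)) * Complex.I ^ (n - 2*k)
          = ((mCount G k : ℂ) * ((n:ℂ) - 2*k)) * ((-1:ℂ)^k * Complex.I ^ (n - 2*k)) by ring,
          I_pow_key k n hk]
    · rw [mCount_eq_zero G k (not_le.1 hk)]
      simp
  rw [Finset.sum_congr rfl h1, ← Finset.sum_mul]
  congr 1
  have : ∀ k ∈ Finset.range (n+1), (mCount G k : ℂ) * ((n : ℂ) - 2 * k)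
      = (n : ℂ) * (mCount G k : ℂ) - 2 * ((k : ℂ) * (mCount G k : ℂ)) := by
    intro k _; ring
  rw [Finset.sum_congr rfl this, Finset.sum_sub_distrib, ← Finset.mul_sum, ← Finset.mul_sum,
    numM_eq_sum G, totS_eq_sum G]
  push_cast
  ring

lemma I_frac (m : ℝ) : Complex.I * (Complex.I - (m:ℂ))⁻¹
    = ((1/(m^2+1) : ℝ) : ℂ) - ((m/(m^2+1) : ℝ) : ℂ) * Complex.I := by
  have hne : (Complex.I - (m:ℂ)) ≠ 0 := by
    intro h
    have := congrArg Complex.im h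
    simp at this
  have hd : ((m:ℝ)^2 + 1 : ℝ) ≠ 0 := by positivity
  have hden : ((m:ℂ)^2 + 1) ≠ 0 := by
    have : ((m:ℂ)^2 + 1) = (((m:ℝ)^2 + 1 : ℝ) : ℂ) := by push_cast; ring
    rw [this]
    exact_mod_cast hd
  have key : Complex.I * (Complex.I - (m:ℂ))⁻¹ = (1 - (m:ℂ)*Complex.I)/((m:ℂ)^2+1) := by
    rw [eq_div_iff hden]
    field_simp [hne]
    linear_combination (m:ℂ) * Complex.I_sq
  rw [key]
  push_cast
  field_simp

theorem avm_eq_sum_of_roots (n : ℕ) (hn : Fintype.card V = n) (G : SimpleGraph V)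
    (μ : Fin n → ℝ)
    (hfact : matchPoly G = ∏ j : Fin n, (Polynomial.X - Polynomial.C (μ j))) :
    (avm G : ℝ) = (1 / 2) * ∑ j : Fin n, μ j ^ 2 / (μ j ^ 2 + 1) := by
  subst hn
  set M := numM G with hMdef
  set S := totS G with hSdef
  set I := Complex.I with hI
  have hne : ∀ j : Fin (Fintype.card V), (I - (μ j : ℂ)) ≠ 0 := by
    intro j h
    have := congrArg Complex.im h
    simp [hI] at this
  -- evaluate the product at I
  have hprod : aeval I (matchPoly G) = ∏ j : Fin (Fintype.card V), (I - (μ j : ℂ)) := by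
    rw [hfact, map_prod]
    simp
  -- derivative of the product evaluated at I
  have hderiv : aeval I (derivative (matchPoly G))
      = aeval I (matchPoly G) * ∑ j : Fin (Fintype.card V), (I - (μ j : ℂ))⁻¹ := by
    rw [hfact, derivative_finset_prod, map_sum]
    have h1 : ∀ j : Fin (Fintype.card V), j ∈ Finset.univ →
        aeval I ((∏ k ∈ Finset.univ.erase j, (Polynomial.X - Polynomial.C (μ k))) *
          derivative (Polynomial.X - Polynomial.C (μ j)))
        = aeval I (matchPoly G) * (I - (μ j : ℂ))⁻¹ := by
      intro j _
      rw [derivative_sub, derivative_X, derivative_C, sub_zero, mul_one, map_prod]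
      have h2 : (∏ k ∈ Finset.univ.erase j, (I - (μ k : ℂ)))
          = aeval I (matchPoly G) * (I - (μ j : ℂ))⁻¹ := by
        rw [hprod, ← Finset.mul_prod_erase Finset.univ _ (Finset.mem_univ j),
          mul_comm (I - (μ j : ℂ)), mul_assoc, mul_inv_cancel₀ (hne j), mul_one]
      rw [← h2]
      exact Finset.prod_congr rfl fun k _ => by simp
    rw [Finset.sum_congr rfl h1, ← Finset.mul_sum, ← hfact]
  -- the key complex identity
  have hkey : (M : ℂ) * ∑ j : Fin (Fintype.card V), I * (I - (μ j : ℂ))⁻¹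
      = (Fintype.card V : ℂ) * M - 2 * S := by
    have h3 := aeval_I_deriv G
    rw [hderiv, aeval_I G, ← hI, ← hMdef, ← hSdef] at h3
    have hIn : (I : ℂ) ^ (Fintype.card V) ≠ 0 := pow_ne_zero _ Complex.I_ne_zero
    apply mul_right_cancel₀ hIn
    calc (M : ℂ) * (∑ j : Fin (Fintype.card V), I * (I - (μ j : ℂ))⁻¹) * I ^ (Fintype.card V)
        = ((M : ℂ) * I ^ (Fintype.card V) *
            ∑ j : Fin (Fintype.card V), (I - (μ j : ℂ))⁻¹) * I := by
          rw [← Finset.mul_sum]; ring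
      _ = ((Fintype.card V : ℂ) * M - 2 * S) * I ^ (Fintype.card V) := h3
  -- take real parts
  set T : ℝ := ∑ j : Fin (Fintype.card V), 1 / (μ j ^ 2 + 1) with hT
  set U : ℝ := ∑ j : Fin (Fintype.card V), μ j / (μ j ^ 2 + 1) with hU
  have hsum : (∑ j : Fin (Fintype.card V), I * (I - (μ j : ℂ))⁻¹)
      = ((T : ℝ) : ℂ) - ((U : ℝ) : ℂ) * I := by
    rw [Finset.sum_congr rfl fun j _ => I_frac (μ j), Finset.sum_sub_distrib, ← Finset.sum_mul]
    push_cast [hT, hU]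
    ring
  have hre : (M : ℝ) * T = (Fintype.card V : ℝ) * M - 2 * S := by
    rw [hsum] at hkey
    have := congrArg Complex.re hkey
    simpa [hI, Complex.mul_re, Complex.sub_re, Complex.ofReal_re, Complex.ofReal_im,
      Complex.mul_im, Complex.I_re, Complex.I_im] using this
  -- conclude
  have hM0 : (M : ℝ) ≠ 0 := by
    exact_mod_cast (numM_pos G).ne'
  have hsum2 : (∑ j : Fin (Fintype.card V), μ j ^ 2 / (μ j ^ 2 + 1))
      = (Fintype.card V : ℝ) - T := by
    rw [eq_sub_iff_add_eq, hT, ← Finset.sum_add_distrib]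
    have h4 : ∀ j : Fin (Fintype.card V), μ j ^ 2 / (μ j ^ 2 + 1) + 1 / (μ j ^ 2 + 1) = 1 := by
      intro j
      have : (μ j ^ 2 + 1 : ℝ) ≠ 0 := by positivity
      field_simp
    rw [Finset.sum_congr rfl fun j _ => h4 j]
    simp
  have havm : ((avm G : ℚ) : ℝ) = (S : ℝ) / (M : ℝ) := by
    rw [avm, ← hMdef, ← hSdef]
    push_cast
    ring
  rw [havm, hsum2]
  have h5 : T = ((Fintype.card V : ℝ) * M - 2 * S) / M := by
    rw [← hre, mul_comm, mul_div_assoc, div_self hM0, mul_one]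
  rw [h5]
  field_simp
  ring

end AvgMatching
end
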